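/- arXiv:2302.06832 — 9 statements merged into one kernel-verified Lean document; each statement's English description precedes it below -/
import Mathlib

section
/- For every real number x > 0, e·(x − ln x) ≤ e^x / x. -/
open Real

theorem stmt_0 : ∀ x : ℝ, 0 < x →
    exp 1 * (x - log x) ≤ exp x / x := by
  intro x hx
  calc exp 1 * (x - log x) ≤ exp (x - log x) := exp_one_mul_le_exp
    _ = exp x / x := by rw [exp_sub, exp_log hx]
end

section
/- For every real number β > 0 and fixed reals r and λ > 0, the function h(β) = e^{2−r}/β + (ln β + r − 1)·e^{2−r}/(λβ) satisfies h(β) ≤ e^λ / λ. -/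
/-! The bound is the tangent-line inequality `t + 1 ≤ exp t` at `t = λ + ln β + r - 2`:
multiplied by `e^{2-r}`, it reads `e^{2-r} (λ + ln β + r - 1) ≤ e^λ β`, which is the claim after
putting `h(β)` over the common denominator `λ β`. -/

open Real

theorem add_log_le_exp_sub_one_mul (c : ℝ) {x : ℝ} (hx : 0 < x) :
    c + log x ≤ exp (c - 1) * x := by
  calc c + log x = (c - 1 + log x) + 1 := by ring
    _ ≤ exp (c - 1 + log x) := add_one_le_exp _
    _ = exp (c - 1) * x := by rw [exp_add, exp_log hx]

theorem stmt_1 (r lam : ℝ) (hlam : 0 < lam) :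
    ∀ β : ℝ, 0 < β →
      exp (2 - r) / β + (log β + r - 1) * exp (2 - r) / (lam * β) ≤ exp lam / lam := by
  intro β hβ
  have tangent : exp (2 - r) * (lam + r - 1 + log β) ≤ exp lam * β := by
    calc exp (2 - r) * (lam + r - 1 + log β)
        ≤ exp (2 - r) * (exp (lam + r - 1 - 1) * β) :=
          mul_le_mul_of_nonneg_left (add_log_le_exp_sub_one_mul _ hβ) (exp_pos _).le
      _ = exp lam * β := by rw [← mul_assoc, ← exp_add]; ring_nf
  calc exp (2 - r) / β + (log β + r - 1) * exp (2 - r) / (lam * β)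
      = exp (2 - r) * (lam + r - 1 + log β) / (lam * β) := by field_simp; ring
    _ ≤ exp lam * β / (lam * β) := by gcongr
    _ = exp lam / lam := mul_div_mul_right _ _ hβ.ne'
end

section
/- For every real number β > 0 and fixed reals r and λ > 0, the function h(β) = e^{1−r}/β + e^{1−r}·(ln β + r)/(λβ) satisfies h(β) ≤ e^λ / λ. -/
open Real

/- With `t = log β + r + λ - 1`, the bound `t + 1 ≤ eᵗ` reads
`λ + log β + r ≤ β e^{r + λ - 1}`; multiplying by `e^{1-r} / (λβ)` gives `h β ≤ e^λ / λ`,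
with equality exactly at `t = 0`, i.e. `β = e^{1-λ-r}`. -/

theorem Real.log_add_le_mul_exp_sub_one {x : ℝ} (hx : 0 < x) (c : ℝ) :
    log x + c ≤ x * exp (c - 1) := by
  have h := log_le_sub_one_of_pos (mul_pos hx (exp_pos (c - 1)))
  rw [log_mul hx.ne' (exp_pos _).ne', log_exp] at h
  linarith

theorem stmt_2 (r lam : ℝ) (hlam : 0 < lam) :
    ∀ β : ℝ, 0 < β →
      exp (1 - r) / β + exp (1 - r) * (log β + r) / (lam * β) ≤ exp lam / lam := by
  intro β hβ
  have hsum : exp (1 - r) / β + exp (1 - r) * (log β + r) / (lam * β)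
      = exp (1 - r) * (log β + (r + lam)) / (lam * β) := by
    field_simp
    ring
  have hexp : exp (1 - r) * exp (r + lam - 1) = exp lam := by
    rw [← exp_add]
    ring_nf
  calc exp (1 - r) / β + exp (1 - r) * (log β + r) / (lam * β)
      = exp (1 - r) * (log β + (r + lam)) / (lam * β) := hsum
    _ ≤ exp (1 - r) * (β * exp (r + lam - 1)) / (lam * β) := by
      gcongr
      exact log_add_le_mul_exp_sub_one hβ _
    _ = exp lam / lam := by
      rw [← hexp]
      field_simp
end

section
/- For every x in the interval [1/e, 1], 1 + e − (ln x + 1)/x ≤ e^x / x. -/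
/-! With `x = 1 - t`, `t ∈ [0, 1 - 1/e]`, the inequality reads
`e·e^{-t} - (1 + e)(1 - t) + log (1 - t) + 1 ≥ 0`. Bounding `e^{-t}` below by its cubic Taylor
polynomial and `-log (1 - t)` above by eight terms of its series plus the tail `t⁹/(1 - t) ≤ e t⁹`
reduces it to `∑_{k=2}^{8} t^k/k ≤ e (t²/2 - t³/6 - t⁹)`. After dividing by `t²` every
non-constant coefficient is negative, so it suffices to check it at `t = 0.64 > 1 - 1/e`. -/

open Real Finset

lemma cubic_le_exp_neg {t : ℝ} (h0 : 0 ≤ t) (h1 : t ≤ 1) :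
    1 - t + t ^ 2 / 2 - t ^ 3 / 6 ≤ exp (-t) := by
  have h := (abs_le.mp (exp_bound (x := -t) (by rwa [abs_neg, abs_of_nonneg h0]) (n := 5)
    (by norm_num))).1
  simp only [sum_range_succ, sum_range_zero, abs_neg, abs_of_nonneg h0] at h
  norm_num [Nat.factorial] at h
  nlinarith [pow_le_pow_of_le_one h0 h1 (by norm_num : 4 ≤ 5), pow_nonneg h0 4]

lemma neg_log_one_sub_le {t : ℝ} (h0 : 0 ≤ t) (h1 : t < 1) (n : ℕ) :
    -log (1 - t) ≤ ∑ i ∈ range n, t ^ (i + 1) / (i + 1) + t ^ (n + 1) / (1 - t) := by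
  have h := abs_log_sub_add_sum_range_le (x := t) (by rwa [abs_of_nonneg h0]) n
  rw [abs_of_nonneg h0, abs_le] at h
  linarith [h.1]

lemma pow_div_sum_le_mul_of_le {a t : ℝ} (ha : 2.7 ≤ a) (h0 : 0 ≤ t) (h1 : t ≤ 0.64) :
    t ^ 2 / 2 + t ^ 3 / 3 + t ^ 4 / 4 + t ^ 5 / 5 + t ^ 6 / 6 + t ^ 7 / 7 + t ^ 8 / 8
      ≤ a * (t ^ 2 / 2 - t ^ 3 / 6 - t ^ 9) := by
  have hp : 0 ≤ 2.7 * (1 / 2 - t / 6 - t ^ 7)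
      - (1 / 2 + t / 3 + t ^ 2 / 4 + t ^ 3 / 5 + t ^ 4 / 6 + t ^ 5 / 7 + t ^ 6 / 8) := by
    calc (0 : ℝ) ≤ 2.7 * (1 / 2 - 0.64 / 6 - 0.64 ^ 7)
          - (1 / 2 + 0.64 / 3 + 0.64 ^ 2 / 4 + 0.64 ^ 3 / 5 + 0.64 ^ 4 / 6 + 0.64 ^ 5 / 7
            + 0.64 ^ 6 / 8) := by norm_num
      _ ≤ _ := by gcongr
  have hc : 0 ≤ 1 / 2 - t / 6 - t ^ 7 := by
    nlinarith [pow_le_pow_left₀ h0 h1 7]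
  nlinarith [mul_nonneg (sq_nonneg t) hp,
    mul_le_mul_of_nonneg_right ha (mul_nonneg (sq_nonneg t) hc)]

lemma add_one_mul_sub_log_sub_one_le_exp {x : ℝ} (hx₀ : 1 / exp 1 ≤ x) (hx₁ : x ≤ 1) :
    (1 + exp 1) * x - (log x + 1) ≤ exp x := by
  obtain ⟨t, rfl⟩ : ∃ t, x = 1 - t := ⟨1 - x, by ring⟩
  have he : 2.7 ≤ exp 1 := by linarith [exp_one_gt_d9]
  have hex : 1 ≤ exp 1 * (1 - t) := by rwa [div_le_iff₀' (exp_pos 1)] at hx₀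
  have ht₀ : 0 ≤ t := by linarith
  have ht₁ : t ≤ 0.64 := by nlinarith [exp_one_lt_d9]
  have hexp : exp 1 * (1 - t + t ^ 2 / 2 - t ^ 3 / 6) ≤ exp (1 - t) := by
    rw [sub_eq_add_neg 1 t, exp_add]
    exact mul_le_mul_of_nonneg_left (cubic_le_exp_neg ht₀ (by linarith)) (exp_pos 1).le
  have hlog := neg_log_one_sub_le ht₀ (by linarith) 8
  simp only [sum_range_succ, sum_range_zero] at hlog
  norm_num at hlog
  have htail : t ^ 9 / (1 - t) ≤ exp 1 * t ^ 9 := by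
    rw [div_le_iff₀ (by linarith)]
    nlinarith [pow_nonneg ht₀ 9]
  linarith [pow_div_sum_le_mul_of_le he ht₀ ht₁]

theorem stmt_3 : ∀ x : ℝ, x ∈ Set.Icc (1 / exp 1) 1 →
    1 + exp 1 - (log x + 1) / x ≤ exp x / x := by
  rintro x ⟨hx₀, hx₁⟩
  have hx : 0 < x := (by positivity : (0 : ℝ) < 1 / exp 1).trans_le hx₀
  calc 1 + exp 1 - (log x + 1) / x = ((1 + exp 1) * x - (log x + 1)) / x := by field_simp
    _ ≤ exp x / x := by gcongr; exact add_one_mul_sub_log_sub_one_le_exp hx₀ hx₁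
end

section
/- Suppose x₀ = 1 and positive reals x₁ < x₂ < ⋯ < x_n satisfy Σ_{j=1}^{i+1} x_j ≤ γ·x_i for all i = 0, 1, …, n−1, where γ ≥ 1. Define a₁ = γ − 1 and a_i = γ − γ/a_{i−1}. Then for each i = 1, …, n−1 (assuming a_1,…,a_i > 0): x_{i+1} ≤ a_i·x_i and Σ_{j=1}^{i+1} x_j ≥ (γ/a_i)·x_{i+1}. -/
open Real Finset

/-!
The second bound is an invariant that propagates: if `(γ / aᵢ₋₁) xᵢ ≤ ∑_{j ≤ i} xⱼ`, then the
constraint `∑_{j ≤ i+1} xⱼ ≤ γ xᵢ` gives `xᵢ₊₁ ≤ (γ - γ / aᵢ₋₁) xᵢ = aᵢ xᵢ`, and this in turn yields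
`(γ / aᵢ) xᵢ₊₁ ≤ ∑_{j ≤ i+1} xⱼ`. The base case `i = 1` is the same step with `γ / a₀` replaced
by `1`, since `x₁ = ∑_{j ≤ 1} xⱼ`.
-/

/-- One step of the induction, with `b` standing for `γ / aᵢ₋₁`, `s` for `∑_{j ≤ i} xⱼ`,
`x` for `xᵢ` and `y` for `xᵢ₊₁`. -/
theorem ratio_bounds_step {γ b s x y : ℝ} (hb : 0 ≤ b) (ha : 0 < γ - b) (hs : b * x ≤ s)
    (h : s + y ≤ γ * x) : y ≤ (γ - b) * x ∧ γ / (γ - b) * y ≤ s + y := by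
  have hy : y ≤ (γ - b) * x := by linarith
  refine ⟨hy, ?_⟩
  rw [div_mul_eq_mul_div, div_le_iff₀ ha]
  nlinarith [mul_le_mul_of_nonneg_left hy hb, mul_le_mul_of_nonneg_left hs ha.le]

theorem stmt_10_general (γ : ℝ) (hγ : 1 ≤ γ) (n : ℕ) (x : ℕ → ℝ)
    (hcons : ∀ i, i ≤ n - 1 → (∑ j ∈ Finset.Icc 1 (i + 1), x j) ≤ γ * x i)
    (a : ℕ → ℝ)
    (ha1 : a 1 = γ - 1)
    (harec : ∀ i, 2 ≤ i → a i = γ - γ / a (i - 1)) :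
    ∀ i, 1 ≤ i → i ≤ n - 1 → (∀ j, 1 ≤ j → j ≤ i → 0 < a j) →
      x (i + 1) ≤ a i * x i ∧ (γ / a i) * x (i + 1) ≤ ∑ j ∈ Finset.Icc 1 (i + 1), x j := by
  have hsum : ∀ i, 1 ≤ i → ∑ j ∈ Icc 1 (i + 1), x j = ∑ j ∈ Icc 1 i, x j + x (i + 1) :=
    fun i hi => sum_Icc_succ_top (by omega) x
  intro i hi
  induction i, hi using Nat.le_induction with
  | base =>
    intro hn hpos
    have hcons1 := hcons 1 hn
    rw [hsum 1 le_rfl] at hcons1 ⊢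
    rw [ha1]
    simpa using ratio_bounds_step zero_le_one (ha1 ▸ hpos 1 le_rfl le_rfl) (by simp) hcons1
  | succ k hk ih =>
    intro hn hpos
    obtain ⟨-, hprev⟩ := ih (by omega) fun j h1 h2 => hpos j h1 (by omega)
    have hrec : a (k + 1) = γ - γ / a k := harec (k + 1) (by omega)
    rw [hrec, hsum (k + 1) (by omega)]
    exact ratio_bounds_step (div_nonneg (by linarith) (hpos k hk (by omega)).le)
      (hrec ▸ hpos (k + 1) (by omega) le_rfl) hprev (hsum (k + 1) (by omega) ▸ hcons (k + 1) hn)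

theorem stmt_10 (γ : ℝ) (hγ : 1 ≤ γ) (n : ℕ) (x : ℕ → ℝ)
    (hx0 : x 0 = 1)
    (hxpos : ∀ i, 1 ≤ i → i ≤ n → 0 < x i)
    (hxmono : ∀ i j, 1 ≤ i → i < j → j ≤ n → x i < x j)
    (hcons : ∀ i, i ≤ n - 1 → (∑ j ∈ Finset.Icc 1 (i + 1), x j) ≤ γ * x i)
    (a : ℕ → ℝ)
    (ha1 : a 1 = γ - 1)
    (harec : ∀ i, 2 ≤ i → a i = γ - γ / a (i - 1)) :
    ∀ i, 1 ≤ i → i ≤ n - 1 → (∀ j, 1 ≤ j → j ≤ i → 0 < a j) →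
      x (i + 1) ≤ a i * x i ∧ (γ / a i) * x (i + 1) ≤ ∑ j ∈ Finset.Icc 1 (i + 1), x j :=
  stmt_10_general γ hγ n x hcons a ha1 harec
end

section
/- Suppose positive reals x₁ < ⋯ < x_n and x₀ = 1 satisfy Σ_{j=1}^{i+1} x_j ≤ γ x_i for all i = 0,…,n−1, and additionally Σ_{j=1}^n x_j ≤ λ·P and Σ_{j=1}^n x_j + P ≤ γ·x_n for some P > 0 and λ ∈ (0,1). If the associated sequence a_i (a₁ = γ−1, a_i = γ − γ/a_{i−1}) converges to α = (γ + √(γ²−4γ))/2 and 1 + 1/λ ≤ α, then γ ≥ 2 + λ + 1/λ. -/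
/-! With t := 1 + 1/λ ≥ 2, the hypothesis places t below the larger root of s² - γs + γ.
Either t also lies above the midpoint γ/2 of the two roots, or γ ≥ 2t ≥ 4; in both cases
t² - γt + γ ≤ 0, i.e. t² ≤ γ(t - 1), and multiplying by λ gives γ ≥ λ + 2 + 1/λ. -/

open Real Finset Filter

lemma sq_le_mul_sub_one_of_le_larger_root {γ t : ℝ} (ht : 2 ≤ t)
    (h : t ≤ (γ + √(γ ^ 2 - 4 * γ)) / 2) : t ^ 2 ≤ γ * (t - 1) := by
  rcases le_or_gt (2 * t - γ) 0 with hmid | hmid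
  · nlinarith
  · have hsqrt : 2 * t - γ ≤ √(γ ^ 2 - 4 * γ) := by linarith
    -- √ of a negative number is 0, so the discriminant is positive here
    have hdisc : 0 ≤ γ ^ 2 - 4 * γ := by
      by_contra! hneg
      rw [Real.sqrt_eq_zero_of_nonpos hneg.le] at hsqrt
      linarith
    have := pow_le_pow_left₀ hmid.le hsqrt 2
    rw [Real.sq_sqrt hdisc] at this
    nlinarith

theorem stmt_11_general (γ lam : ℝ) (hlam : lam ∈ Set.Ioo (0 : ℝ) 1)
    (hbound : 1 + 1 / lam ≤ (γ + Real.sqrt (γ ^ 2 - 4 * γ)) / 2) :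
    2 + lam + 1 / lam ≤ γ := by
  obtain ⟨hl0, hl1⟩ := hlam
  have ht : 2 ≤ 1 + 1 / lam := by
    have : 1 ≤ 1 / lam := by rw [le_div_iff₀ hl0]; linarith
    linarith
  have key := sq_le_mul_sub_one_of_le_larger_root ht hbound
  calc 2 + lam + 1 / lam = lam * (1 + 1 / lam) ^ 2 := by field_simp; ring
    _ ≤ lam * (γ * (1 + 1 / lam - 1)) := by gcongr
    _ = γ := by field_simp; ring

theorem stmt_11 (γ lam P : ℝ) (hγ : 1 ≤ γ) (hlam : lam ∈ Set.Ioo (0 : ℝ) 1) (hP : 0 < P)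
    (n : ℕ) (x : ℕ → ℝ)
    (hx0 : x 0 = 1)
    (hxpos : ∀ i, 1 ≤ i → i ≤ n → 0 < x i)
    (hxmono : ∀ i j, 1 ≤ i → i < j → j ≤ n → x i < x j)
    (hcons : ∀ i, i ≤ n - 1 → (∑ j ∈ Finset.Icc 1 (i + 1), x j) ≤ γ * x i)
    (hpred : (∑ j ∈ Finset.Icc 1 n, x j) ≤ lam * P)
    (hrob : (∑ j ∈ Finset.Icc 1 n, x j) + P ≤ γ * x n)
    (a : ℕ → ℝ)
    (ha1 : a 1 = γ - 1)
    (harec : ∀ i, 2 ≤ i → a i = γ - γ / a (i - 1))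
    (hconv : Tendsto a atTop (nhds ((γ + Real.sqrt (γ ^ 2 - 4 * γ)) / 2)))
    (hbound : 1 + 1 / lam ≤ (γ + Real.sqrt (γ ^ 2 - 4 * γ)) / 2) :
    2 + lam + 1 / lam ≤ γ :=
  stmt_11_general γ lam hlam hbound
end

section
/- For integers k ≥ 2 and C ≥ 2, and nonnegative integers a₁, …, a_{k−1} satisfying Σ_{i=1}^{k−1} C^i·a_i ≥ C^k, the weighted sum Σ_{i=1}^{k−1} i·a_i is at least C. -/
open Finset

/- Compare the covering sum and the cost sum term by term: with n = k - 1, each option 1 ≤ i ≤ n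
satisfies n * C ^ i ≤ C ^ n * i, because n ≤ i * (n - i + 1) ≤ i * 2 ^ (n - i) ≤ i * C ^ (n - i)
(this is the convexity bound i ≥ n / C ^ (n - i)). Summing, n * C ^ (n + 1) ≤ C ^ n * ∑ i * a i,
so the cost is at least n * C ≥ C. -/

lemma Nat.le_mul_pow_sub {n i C : ℕ} (hi : 1 ≤ i) (hin : i ≤ n) (hC : 2 ≤ C) :
    n ≤ i * C ^ (n - i) :=
  calc n ≤ i * (n - i + 1) := by nlinarith [Nat.sub_add_cancel hin]
    _ ≤ i * 2 ^ (n - i) := Nat.mul_le_mul_left i Nat.lt_two_pow_self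
    _ ≤ i * C ^ (n - i) := Nat.mul_le_mul_left i (Nat.pow_le_pow_left hC _)

lemma Nat.mul_pow_le_pow_mul {n i C : ℕ} (hi : 1 ≤ i) (hin : i ≤ n) (hC : 2 ≤ C) :
    n * C ^ i ≤ C ^ n * i :=
  calc n * C ^ i ≤ i * C ^ (n - i) * C ^ i :=
        Nat.mul_le_mul_right _ (Nat.le_mul_pow_sub hi hin hC)
    _ = C ^ n * i := by rw [mul_assoc, ← pow_add, Nat.sub_add_cancel hin, mul_comm]

lemma Nat.mul_sum_pow_mul_le (n C : ℕ) (hC : 2 ≤ C) (a : ℕ → ℕ) :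
    n * ∑ i ∈ Icc 1 n, C ^ i * a i ≤ C ^ n * ∑ i ∈ Icc 1 n, i * a i := by
  rw [mul_sum, mul_sum]
  refine sum_le_sum fun i hi => ?_
  obtain ⟨h1, hin⟩ := mem_Icc.mp hi
  simpa only [mul_assoc] using Nat.mul_le_mul_right (a i) (Nat.mul_pow_le_pow_mul h1 hin hC)

theorem stmt_13 (k C : ℕ) (hk : 2 ≤ k) (hC : 2 ≤ C) (a : ℕ → ℕ)
    (hcov : C ^ k ≤ ∑ i ∈ Finset.Icc 1 (k - 1), C ^ i * a i) :
    C ≤ ∑ i ∈ Finset.Icc 1 (k - 1), i * a i := by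
  obtain ⟨n, rfl⟩ : ∃ n, k = n + 1 := ⟨k - 1, by omega⟩
  rw [Nat.add_sub_cancel] at hcov ⊢
  set S := ∑ i ∈ Icc 1 n, i * a i
  have hcost : C ^ n * (n * C) ≤ C ^ n * S :=
    calc C ^ n * (n * C) = n * C ^ (n + 1) := by ring
      _ ≤ n * ∑ i ∈ Icc 1 n, C ^ i * a i := Nat.mul_le_mul_left n hcov
      _ ≤ C ^ n * S := Nat.mul_sum_pow_mul_le n C hC a
  calc C ≤ n * C := Nat.le_mul_of_pos_left C (by omega)
    _ ≤ S := Nat.le_of_mul_le_mul_left hcost (by positivity)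
end

section
/- Fix ε ∈ (0, e), δ > 0 and integers m > c > 0 with c/δ ≥ −ln(e−ε) − ln ln(e/(e−ε)). Define v_j = ∫_{(j−1)/δ}^{j/δ} e^{−z}dz, b_t = e^{t/δ}, and u_j = ((e−ε)/δ)·max(m−c−j, 0). Then for all integers 1 ≤ s < t ≤ m, u_s − u_t ≤ b_t·Σ_{j=s+1}^m v_j. -/
/-!
With `A = e - ε`, the line `z ↦ A z + A (1 - log A)` is tangent to `exp` at `z = log A`, and the
hypothesis on `c / δ` says exactly `e^{-c/δ} ≤ A (1 - log A)`; hence `A z + e^{-c/δ} ≤ e^z` for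
every real `z`. The sum of integrals telescopes, so the right-hand side equals `e^{a-b} - e^{-b-c/δ}`
with `a = (m - c - s)/δ`, `b = (m - c - t)/δ`, while the left-hand side is `A (a⁺ - b⁺)`.
The inequality then follows by cases on the signs of `a` and `b`.
-/

open Real Finset

theorem intervalIntegral.sum_Icc_integral_sub_one_div {f : ℝ → ℝ} (hf : Continuous f) (δ : ℝ)
    {s m : ℕ} (hsm : s ≤ m) :
    ∑ j ∈ Icc (s + 1) m, ∫ z in ((j : ℝ) - 1) / δ..(j : ℝ) / δ, f z
      = ∫ z in (s : ℝ) / δ..(m : ℝ) / δ, f z := by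
  rw [← Ico_add_one_right_eq_Icc, ← sum_Ico_add',
    ← intervalIntegral.sum_integral_adjacent_intervals_Ico (a := fun k : ℕ => (k : ℝ) / δ) hsm
      fun _ _ => hf.intervalIntegrable _ _]
  push_cast
  simp only [add_sub_cancel_right]

theorem integral_exp_neg (a b : ℝ) : ∫ z in a..b, exp (-z) = exp (-a) - exp (-b) := by
  rw [intervalIntegral.integral_comp_neg (fun x => exp x), integral_exp]

theorem mul_add_mul_one_sub_log_le_exp {A : ℝ} (hA : 0 < A) (z : ℝ) :
    A * z + A * (1 - log A) ≤ exp z := by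
  calc A * z + A * (1 - log A) = A * (z - log A + 1) := by ring
    _ ≤ A * exp (z - log A) := mul_le_mul_of_nonneg_left (add_one_le_exp _) hA.le
    _ = exp z := by rw [exp_sub, exp_log hA, mul_div_cancel₀ _ hA.ne']

theorem exp_neg_le_mul_one_sub_log {A γ : ℝ} (hA0 : 0 < A) (hAe : A < exp 1)
    (hγ : -log A - log (log (exp 1 / A)) ≤ γ) : exp (-γ) ≤ A * (1 - log A) := by
  have hlog : 0 < log (exp 1 / A) := log_pos ((one_lt_div hA0).mpr hAe)
  calc exp (-γ) ≤ exp (log A + log (log (exp 1 / A))) := exp_le_exp.mpr (by linarith)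
    _ = A * (1 - log A) := by
      rw [exp_add, exp_log hA0, exp_log hlog, log_div (exp_ne_zero 1) hA0.ne', log_exp]

theorem mul_max_sub_max_le_exp_sub_exp {A γ a b : ℝ}
    (htangent : ∀ z, A * z + exp (-γ) ≤ exp z) (hba : b ≤ a) (ha : 0 ≤ a + γ) :
    A * (max a 0 - max b 0) ≤ exp (a - b) - exp (-(b + γ)) := by
  rcases le_or_gt 0 b with hb | hb
  · have : exp (-(b + γ)) ≤ exp (-γ) := exp_le_exp.mpr (by linarith)
    rw [max_eq_left (by linarith), max_eq_left hb]
    linarith [htangent (a - b)]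
  rcases le_or_gt a 0 with ha' | ha'
  · have : exp (-(b + γ)) ≤ exp (a - b) := exp_le_exp.mpr (by linarith)
    rw [max_eq_right ha', max_eq_right hb.le]
    linarith
  · have hexp : A * a ≤ exp a - exp (-γ) := by linarith [htangent a]
    have hpos : 0 ≤ exp a - exp (-γ) := sub_nonneg.mpr (exp_le_exp.mpr (by linarith))
    have hb1 : 1 ≤ exp (-b) := one_le_exp (by linarith)
    calc A * (max a 0 - max b 0) = A * a := by rw [max_eq_left ha'.le, max_eq_right hb.le, sub_zero]
      _ ≤ exp (-b) * (exp a - exp (-γ)) := hexp.trans (le_mul_of_one_le_left hpos hb1)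
      _ = exp (a - b) - exp (-(b + γ)) := by
        rw [mul_sub, ← exp_add, ← exp_add]; ring_nf

theorem stmt_17_general (ε δ : ℝ) (c m : ℕ) (hε : ε ∈ Set.Ioo 0 (exp 1)) (hδ : 0 < δ)
    (hcδ : -log (exp 1 - ε) - log (log (exp 1 / (exp 1 - ε))) ≤ (c : ℝ) / δ) :
    ∀ s t : ℕ, 1 ≤ s → s < t → t ≤ m →
      ((exp 1 - ε) / δ) * max ((m : ℝ) - c - s) 0
          - ((exp 1 - ε) / δ) * max ((m : ℝ) - c - t) 0
        ≤ exp ((t : ℝ) / δ) *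
            ∑ j ∈ Finset.Icc (s + 1) m,
              (∫ z in (((j : ℝ) - 1) / δ)..((j : ℝ) / δ), exp (-z)) := by
  intro s t _ hst htm
  set A := exp 1 - ε
  have hA0 : 0 < A := sub_pos.mpr hε.2
  have htangent (z : ℝ) : A * z + exp (-(c / δ)) ≤ exp z :=
    (add_le_add_right (exp_neg_le_mul_one_sub_log hA0 (by linarith [hε.1]) hcδ) _).trans
      (mul_add_mul_one_sub_log_le_exp hA0 z)
  have hsm : s ≤ m := by omega
  have hst' : (s : ℝ) < t := by exact_mod_cast hst
  have hsm' : (s : ℝ) ≤ m := by exact_mod_cast hsm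
  have key := mul_max_sub_max_le_exp_sub_exp htangent (a := (m - c - s) / δ) (b := (m - c - t) / δ)
    (by gcongr) (by rw [← add_div]; exact div_nonneg (by linarith) hδ.le)
  rw [intervalIntegral.sum_Icc_integral_sub_one_div continuous_neg.rexp δ hsm, integral_exp_neg]
  convert key using 1
  · have hmax (x : ℝ) : max (x / δ) 0 = max x 0 / δ := by
      rw [← max_div_div_right hδ.le, zero_div]
    rw [hmax, hmax]; ring
  · rw [mul_sub, ← exp_add, ← exp_add]; congr 1 <;> congr 1 <;> ring

theorem stmt_17 (ε δ : ℝ) (c m : ℕ) (hε : ε ∈ Set.Ioo 0 (exp 1)) (hδ : 0 < δ)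
    (hc : 0 < c) (hcm : c < m)
    (hcδ : -log (exp 1 - ε) - log (log (exp 1 / (exp 1 - ε))) ≤ (c : ℝ) / δ) :
    ∀ s t : ℕ, 1 ≤ s → s < t → t ≤ m →
      ((exp 1 - ε) / δ) * max ((m : ℝ) - c - s) 0
          - ((exp 1 - ε) / δ) * max ((m : ℝ) - c - t) 0
        ≤ exp ((t : ℝ) / δ) *
            ∑ j ∈ Finset.Icc (s + 1) m,
              (∫ z in (((j : ℝ) - 1) / δ)..((j : ℝ) / δ), exp (-z)) :=
  stmt_17_general ε δ c m hε hδ hcδ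
end

section
/- Fix ε ∈ (0, e), δ > 0, integers m > c > 0 with m/δ ≥ ln(e/ε). Define v_j = ∫_{(j−1)/δ}^{j/δ} e^{−z}dz and u_t = ((e−ε)/δ)·max(m−c−t, 0). Then for every integer t with 1 ≤ t ≤ m, h(t) := u_t + e^{t/δ}·Σ_{j=1}^m v_j ≥ ((e−ε)/δ)·(m−c). -/
/-! Since `∑ⱼ vⱼ = 1 - e^{-m/δ} ≥ 1 - ε/e`, the inequality `e·x ≤ eˣ` at `x = t/δ` gives
`((e - ε)/δ)·t ≤ e^{t/δ} ∑ⱼ vⱼ`, and `max (m - c - t) 0 + t ≥ m - c` finishes. -/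

open Real Finset

theorem sum_Icc_integral_exp_neg_div (δ : ℝ) (m : ℕ) :
    ∑ j ∈ Icc 1 m, ∫ z in ((j : ℝ) - 1) / δ..(j : ℝ) / δ, exp (-z)
      = 1 - exp (-((m : ℝ) / δ)) := by
  have hshift : ∑ j ∈ Icc 1 m, ∫ z in ((j : ℝ) - 1) / δ..(j : ℝ) / δ, exp (-z)
      = ∑ k ∈ range m, ∫ z in (k : ℝ) / δ..((k + 1 : ℕ) : ℝ) / δ, exp (-z) := by
    rw [← Ico_add_one_right_eq_Icc, sum_Ico_eq_sum_range]
    refine sum_congr rfl fun k _ => ?_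
    push_cast
    ring_nf
  have hcont : Continuous fun z : ℝ => exp (-z) := by fun_prop
  rw [hshift, intervalIntegral.sum_integral_adjacent_intervals (a := fun k : ℕ => (k : ℝ) / δ)
    fun k _ => hcont.intervalIntegrable _ _, integral_exp_neg]
  simp

theorem exp_neg_le_inv_of_log_le {a y : ℝ} (ha : 0 < a) (h : log a ≤ y) : exp (-y) ≤ a⁻¹ := by
  rw [← exp_log ha, ← exp_neg]
  exact exp_le_exp.2 (neg_le_neg h)

theorem sub_mul_le_exp_mul_one_sub {ε η : ℝ} (hε : ε ≤ exp 1) (hη : η ≤ ε / exp 1) (x : ℝ) :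
    (exp 1 - ε) * x ≤ exp x * (1 - η) := by
  have hfactor : 0 ≤ 1 - ε / exp 1 := by
    rw [sub_nonneg, div_le_one (exp_pos 1)]
    exact hε
  calc (exp 1 - ε) * x = exp 1 * x * (1 - ε / exp 1) := by field_simp
    _ ≤ exp x * (1 - ε / exp 1) := mul_le_mul_of_nonneg_right exp_one_mul_le_exp hfactor
    _ ≤ exp x * (1 - η) := by gcongr

theorem stmt_18_general (ε δ : ℝ) (c m : ℕ) (hε : ε ∈ Set.Ioo 0 (exp 1)) (hδ : 0 < δ)
    (hmδ : log (exp 1 / ε) ≤ (m : ℝ) / δ) :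
    ∀ t : ℕ, 1 ≤ t → t ≤ m →
      ((exp 1 - ε) / δ) * ((m : ℝ) - c)
        ≤ ((exp 1 - ε) / δ) * max ((m : ℝ) - c - t) 0
            + exp ((t : ℝ) / δ) *
                ∑ j ∈ Finset.Icc 1 m,
                  (∫ z in (((j : ℝ) - 1) / δ)..((j : ℝ) / δ), exp (-z)) := by
  obtain ⟨hε0, hεe⟩ := hε
  intro t _ _
  have htail : exp (-((m : ℝ) / δ)) ≤ ε / exp 1 := by
    simpa using exp_neg_le_inv_of_log_le (by positivity) hmδ
  have hlinear : (exp 1 - ε) / δ * t ≤ exp ((t : ℝ) / δ) * (1 - exp (-((m : ℝ) / δ))) := by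
    rw [div_mul_eq_mul_div, mul_div_assoc]
    exact sub_mul_le_exp_mul_one_sub hεe.le htail _
  have hA : 0 ≤ (exp 1 - ε) / δ := div_nonneg (sub_nonneg.2 hεe.le) hδ.le
  rw [sum_Icc_integral_exp_neg_div]
  calc (exp 1 - ε) / δ * ((m : ℝ) - c)
      ≤ (exp 1 - ε) / δ * (max ((m : ℝ) - c - t) 0 + t) := by
        gcongr
        linarith [le_max_left ((m : ℝ) - c - t) 0]
    _ ≤ _ := by linarith

theorem stmt_18 (ε δ : ℝ) (c m : ℕ) (hε : ε ∈ Set.Ioo 0 (exp 1)) (hδ : 0 < δ)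
    (hc : 0 < c) (hcm : c < m)
    (hmδ : log (exp 1 / ε) ≤ (m : ℝ) / δ) :
    ∀ t : ℕ, 1 ≤ t → t ≤ m →
      ((exp 1 - ε) / δ) * ((m : ℝ) - c)
        ≤ ((exp 1 - ε) / δ) * max ((m : ℝ) - c - t) 0
            + exp ((t : ℝ) / δ) *
                ∑ j ∈ Finset.Icc 1 m,
                  (∫ z in (((j : ℝ) - 1) / δ)..((j : ℝ) / δ), exp (-z)) :=
  stmt_18_general ε δ c m hε hδ hmδ
end
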